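/- Let G be a finite triangle-free simple graph on n vertices with minimum degree at least 1, let λ > 0 and α, β > 0, and let 𝐈 be a random independent set drawn from the hard-core model on G at fugacity λ. Let 𝐗 = Σ_{v∈𝐈} deg(v) be the number of edges of G between 𝐈 and V(G)\𝐈. Then 𝔼𝐗 ≥ n·λ·((1/n)·Σ_{v∈V(G)} log deg(v) + log(α/β) + log log(1+λ) + 1) / ((1 + α/β)·(1+λ)·log(1+λ)). -/

import Mathlib

/-- A finite set of vertices is independent in `G`. -/
def IndepFinset {V : Type*} (G : SimpleGraph V) (s : Finset V) : Prop :=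
  ∀ u ∈ s, ∀ v ∈ s, ¬ G.Adj u v

instance {V : Type*} (G : SimpleGraph V) [DecidableRel G.Adj] (s : Finset V) :
    Decidable (IndepFinset G s) :=
  inferInstanceAs (Decidable (∀ u ∈ s, ∀ v ∈ s, ¬ G.Adj u v))

/-- The probability that the hard-core model on `G` at fugacity `lam` produces the set
`I`: it is `lam^|I| / Z_G(lam)` if `I` is independent, and `0` otherwise. -/
noncomputable def hcProb {V : Type*} [Fintype V] (G : SimpleGraph V) [DecidableRel G.Adj]
    (lam : ℝ) (I : Finset V) : ℝ :=
  (if IndepFinset G I then lam ^ I.card else 0) /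
    ∑ J : Finset V, if IndepFinset G J then lam ^ J.card else 0

/-!
Fix a vertex `v` and condition on `J = 𝐈 \ N[v]`. Given `J`, the set `𝐈` is either `J ∪ {v}` or
`J ∪ S` for an arbitrary subset `S` of the `k` neighbours of `v` having no neighbour in `J`; every
such `J ∪ S` is independent because `G` is triangle-free. The two cases have conditional weights
`λ` and `(1 + λ)^k`, and `E[|S|] = kλ(1 + λ)^(k-1) / (λ + (1 + λ)^k)`. Applying `log x ≤ x - 1`
twice gives `(1 + log y)(t + w) ≤ y(1 + t) + w log w`; with `y = γ deg(v) log(1 + λ)`,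
`w = (1 + λ)^k` and `γ = α / β` this says that `γ deg(v) P(v ∈ 𝐈) + E|N(v) ∩ 𝐈|` is at least
`(1 + γ)` times the share of `v` in the bound, whatever `k` is. Summed over `v`, both
`Σ_v deg(v) [v ∈ 𝐈]` and `Σ_v |N(v) ∩ 𝐈|` are `𝐗`.
-/

open Finset Real

namespace Finset

variable {ι R : Type*}

theorem sum_powerset_pow_card [CommSemiring R] (s : Finset ι) (x : R) :
    ∑ t ∈ s.powerset, x ^ #t = (1 + x) ^ #s := by
  simpa [add_comm] using sum_pow_mul_eq_add_pow x 1 s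

theorem one_add_mul_sum_powerset_card_mul_pow [CommRing R] [DecidableEq ι] (s : Finset ι)
    (x : R) : (1 + x) * ∑ t ∈ s.powerset, (#t : R) * x ^ #t = #s * x * (1 + x) ^ #s := by
  induction s using Finset.induction_on with
  | empty => simp
  | insert a s ha ih =>
    have hinsert : ∑ t ∈ s.powerset, (#(insert a t) : R) * x ^ #(insert a t) =
        ∑ t ∈ s.powerset, (x * ((#t : R) * x ^ #t) + x * x ^ #t) := by
      refine sum_congr rfl fun t ht => ?_
      rw [card_insert_of_notMem fun h => ha (mem_powerset.mp ht h)]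
      push_cast
      ring
    rw [sum_powerset_insert ha, card_insert_of_notMem ha, hinsert, sum_add_distrib, ← mul_sum,
      ← mul_sum, sum_powerset_pow_card]
    push_cast
    linear_combination (1 + x) * ih

end Finset

theorem Real.one_add_log_mul_add_le {y w t : ℝ} (hy : 0 < y) (hw : 0 < w) (ht : 0 ≤ t) :
    (1 + log y) * (t + w) ≤ y * (1 + t) + w * log w := by
  have hyw : w * (1 + log y - log w) ≤ y := by
    have := log_le_sub_one_of_pos (div_pos hy hw)
    rw [log_div hy.ne' hw.ne', le_sub_iff_add_le, le_div_iff₀ hw] at this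
    linarith
  have hy1 : t * (1 + log y) ≤ t * y :=
    mul_le_mul_of_nonneg_left (by linarith [log_le_sub_one_of_pos hy]) ht
  linarith

/-- The share in the bound of a vertex of degree `d`, where `γ = α / β`. -/
noncomputable def hardCoreLocalBound (lam γ d : ℝ) : ℝ :=
  lam * (log d + log γ + log (log (1 + lam)) + 1) / ((1 + γ) * (1 + lam) * log (1 + lam))

theorem one_add_mul_hardCoreLocalBound_mul_le {lam γ d A : ℝ} (k : ℕ) (hlam : 0 < lam)
    (hγ : 0 < γ) (hd : 0 < d) (hA : (1 + lam) * A = k * lam * (1 + lam) ^ k) :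
    (1 + γ) * hardCoreLocalBound lam γ d * (lam + (1 + lam) ^ k) ≤ γ * d * lam + A := by
  have hL : 0 < log (1 + lam) := log_pos (by linarith)
  have key := one_add_log_mul_add_le (mul_pos (mul_pos hγ hd) hL)
    (pow_pos (by linarith : 0 < 1 + lam) k) hlam.le
  rw [log_pow, log_mul (mul_pos hγ hd).ne' hL.ne', log_mul hγ.ne' hd.ne'] at key
  calc (1 + γ) * hardCoreLocalBound lam γ d * (lam + (1 + lam) ^ k)
      = lam / ((1 + lam) * log (1 + lam)) * ((1 + (log γ + log d + log (log (1 + lam)))) *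
          (lam + (1 + lam) ^ k)) := by
        unfold hardCoreLocalBound
        field_simp
        ring
    _ ≤ lam / ((1 + lam) * log (1 + lam)) * (γ * d * log (1 + lam) * (1 + lam) +
          (1 + lam) ^ k * (k * log (1 + lam))) := by gcongr
    _ = γ * d * lam + A := by
        field_simp
        linear_combination -hA

theorem card_mul_div_eq_sum_hardCoreLocalBound {V : Type*} [Fintype V] (lam γ : ℝ)
    (d : V → ℝ) :
    Fintype.card V * lam *
        (1 / Fintype.card V * ∑ v, log (d v) + log γ + log (log (1 + lam)) + 1) /
      ((1 + γ) * (1 + lam) * log (1 + lam)) = ∑ v, hardCoreLocalBound lam γ (d v) := by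
  rcases isEmpty_or_nonempty V with _ | _
  · simp
  simp only [hardCoreLocalBound, ← sum_div, ← mul_sum, sum_add_distrib, sum_const, card_univ,
    nsmul_eq_mul]
  field_simp

theorem SimpleGraph.sum_card_neighborFinset_inter {V : Type*} [Fintype V] [DecidableEq V]
    (G : SimpleGraph V) [DecidableRel G.Adj] (s : Finset V) :
    ∑ v, #(G.neighborFinset v ∩ s) = ∑ u ∈ s, G.degree u := by
  calc ∑ v, #(G.neighborFinset v ∩ s) = ∑ v, ∑ u ∈ s, if G.Adj v u then 1 else 0 := by
        simp_rw [← card_filter, G.neighborFinset_eq_filter, filter_inter, univ_inter]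
    _ = ∑ u ∈ s, G.degree u := by
        rw [sum_comm]
        simp [← G.card_neighborFinset_eq_degree, G.neighborFinset_eq_filter, G.adj_comm]

section IndepFinset

variable {V : Type*} {G : SimpleGraph V}

theorem IndepFinset.mono {s t : Finset V} (ht : IndepFinset G t) (hst : s ⊆ t) :
    IndepFinset G s :=
  fun u hu w hw => ht u (hst hu) w (hst hw)

theorem IndepFinset.union [DecidableEq V] {s t : Finset V} (hs : IndepFinset G s)
    (ht : IndepFinset G t) (hst : ∀ u ∈ s, ∀ w ∈ t, ¬ G.Adj u w) : IndepFinset G (s ∪ t) := by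
  intro u hu w hw
  rcases mem_union.mp hu with hu | hu <;> rcases mem_union.mp hw with hw | hw
  exacts [hs u hu w hw, hst u hu w hw, fun h => hst w hw u hu h.symm, ht u hu w hw]

theorem IndepFinset.insert [DecidableEq V] {v : V} {s : Finset V} (hs : IndepFinset G s)
    (hv : ∀ w ∈ s, ¬ G.Adj v w) : IndepFinset G (insert v s) := by
  rw [insert_eq]
  exact IndepFinset.union (by simp [IndepFinset]) hs (by simpa using hv)

theorem indepFinset_of_subset_neighborFinset [Fintype V] [DecidableRel G.Adj]
    (hG : G.CliqueFree 3) {v : V} {s : Finset V} (hs : s ⊆ G.neighborFinset v) :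
    IndepFinset G s := fun u hu w hw huw =>
  G.isIndepSet_neighborSet_of_triangleFree hG v (by simpa using hs hu) (by simpa using hs hw)
    (G.ne_of_adj huw) huw

end IndepFinset

section Fiber

variable {V : Type*} [Fintype V] (G : SimpleGraph V) [DecidableRel G.Adj]

def indepFinsets : Finset (Finset V) := {I | IndepFinset G I}

theorem sum_hcProb_mul (lam : ℝ) (X : Finset V → ℝ) :
    ∑ I, hcProb G lam I * X I =
      (∑ I ∈ indepFinsets G, lam ^ #I * X I) / ∑ I ∈ indepFinsets G, lam ^ #I := by
  simp only [hcProb, indepFinsets, sum_filter, div_mul_eq_mul_div, ← sum_div, ite_mul, zero_mul]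

theorem sum_indepFinsets_pow_card_pos {lam : ℝ} (hlam : 0 < lam) :
    0 < ∑ I ∈ indepFinsets G, lam ^ #I :=
  sum_pos' (fun I _ => by positivity)
    ⟨∅, mem_filter.mpr ⟨mem_univ _, by simp [IndepFinset]⟩, by simp⟩

variable [DecidableEq V]

def freeNeighborFinset (v : V) (J : Finset V) : Finset V :=
  {u ∈ G.neighborFinset v | ∀ w ∈ J, ¬ G.Adj u w}

theorem filter_indepFinsets_sdiff_eq (hG : G.CliqueFree 3) {v : V} {J : Finset V}
    (hJ : IndepFinset G J) (hJv : Disjoint J (insert v (G.neighborFinset v))) :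
    {I ∈ indepFinsets G | I \ insert v (G.neighborFinset v) = J} =
      insert (insert v J) ((freeNeighborFinset G v J).powerset.image (J ∪ ·)) := by
  have hvJ : ∀ w ∈ J, w ≠ v ∧ ¬ G.Adj v w := fun w hw => by
    simpa [not_or, eq_comm] using disjoint_left.mp hJv hw
  ext I
  simp only [indepFinsets, mem_filter, mem_univ, true_and, mem_insert, mem_image, mem_powerset]
  constructor
  · rintro ⟨hI, rfl⟩
    by_cases hv : v ∈ I
    · left
      ext u
      have := hI v hv u
      by_cases huv : u = v <;> simp_all
    · right
      refine ⟨I ∩ G.neighborFinset v, fun u hu => ?_, ?_⟩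
      · simp only [mem_inter] at hu
        simp only [freeNeighborFinset, mem_filter, mem_sdiff]
        exact ⟨hu.2, fun w hw => hI u hu.1 w hw.1⟩
      · ext u
        by_cases huv : u = v <;> by_cases hu : u ∈ G.neighborFinset v <;> simp_all
  · rintro (rfl | ⟨S, hS, rfl⟩)
    · refine ⟨hJ.insert fun w hw => (hvJ w hw).2, ?_⟩
      rw [insert_sdiff_insert, sdiff_eq_self_of_disjoint hJv]
    · have hSN : S ⊆ G.neighborFinset v := hS.trans (filter_subset _ _)
      refine ⟨hJ.union (indepFinset_of_subset_neighborFinset hG hSN) fun u hu w hw h =>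
        (mem_filter.mp (hS hw)).2 u hu h.symm, ?_⟩
      rw [union_sdiff_distrib, sdiff_eq_self_of_disjoint hJv,
        sdiff_eq_empty_iff_subset.mpr (hSN.trans (subset_insert _ _)), union_empty]

theorem disjoint_of_subset_freeNeighborFinset {v : V} {J S : Finset V}
    (hJv : Disjoint J (insert v (G.neighborFinset v))) (hS : S ⊆ freeNeighborFinset G v J) :
    Disjoint (insert v J) S :=
  disjoint_insert_left.mpr ⟨fun hvS => by simpa using (mem_filter.mp (hS hvS)).1,
    hJv.mono_right ((hS.trans (filter_subset _ _)).trans (subset_insert _ _))⟩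

theorem sum_filter_indepFinsets_sdiff_eq {M : Type*} [AddCommMonoid M] (hG : G.CliqueFree 3)
    {v : V} {J : Finset V} (hJ : IndepFinset G J)
    (hJv : Disjoint J (insert v (G.neighborFinset v))) (f : Finset V → M) :
    ∑ I ∈ indepFinsets G with I \ insert v (G.neighborFinset v) = J, f I =
      f (insert v J) + ∑ S ∈ (freeNeighborFinset G v J).powerset, f (J ∪ S) := by
  have hdisj {S} (hS : S ∈ (freeNeighborFinset G v J).powerset) : Disjoint (insert v J) S :=
    disjoint_of_subset_freeNeighborFinset G hJv (mem_powerset.mp hS)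
  rw [filter_indepFinsets_sdiff_eq G hG hJ hJv, sum_insert, sum_image]
  · intro S hS S' hS' hSS'
    simp only at hSS'
    rw [← union_sdiff_cancel_left ((hdisj hS).mono_left (subset_insert _ _)), hSS',
      union_sdiff_cancel_left ((hdisj hS').mono_left (subset_insert _ _))]
  · simp only [mem_image, not_exists, not_and]
    intro S hS hSJ
    rcases mem_union.mp (hSJ ▸ mem_insert_self v J) with hvJ | hvS
    · exact disjoint_left.mp hJv hvJ (mem_insert_self _ _)
    · exact disjoint_left.mp (hdisj hS) (mem_insert_self _ _) hvS

theorem sum_filter_indepFinsets_sdiff_pow_card (hG : G.CliqueFree 3) {v : V} {J : Finset V}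
    (hJ : IndepFinset G J) (hJv : Disjoint J (insert v (G.neighborFinset v))) (lam : ℝ) :
    ∑ I ∈ indepFinsets G with I \ insert v (G.neighborFinset v) = J, lam ^ #I =
      lam ^ #J * (lam + (1 + lam) ^ #(freeNeighborFinset G v J)) := by
  have hvJ : v ∉ J := fun h => disjoint_left.mp hJv h (mem_insert_self _ _)
  rw [sum_filter_indepFinsets_sdiff_eq G hG hJ hJv, card_insert_of_notMem hvJ,
    ← sum_powerset_pow_card, mul_add, mul_sum, pow_succ]
  congr 1
  refine sum_congr rfl fun S hS => ?_
  have hdisj := disjoint_of_subset_freeNeighborFinset G hJv (mem_powerset.mp hS)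
  rw [card_union_of_disjoint (hdisj.mono_left (subset_insert _ _)), pow_add]

theorem sum_filter_indepFinsets_sdiff_pow_card_mul (hG : G.CliqueFree 3) {v : V}
    {J : Finset V} (hJ : IndepFinset G J) (hJv : Disjoint J (insert v (G.neighborFinset v)))
    (lam γ : ℝ) :
    ∑ I ∈ indepFinsets G with I \ insert v (G.neighborFinset v) = J, lam ^ #I *
        (γ * (if v ∈ I then (G.degree v : ℝ) else 0) + #(G.neighborFinset v ∩ I)) =
      lam ^ #J * (γ * G.degree v * lam +
        ∑ S ∈ (freeNeighborFinset G v J).powerset, (#S : ℝ) * lam ^ #S) := by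
  have hvJ : v ∉ J := fun h => disjoint_left.mp hJv h (mem_insert_self _ _)
  have hJN : Disjoint J (G.neighborFinset v) := hJv.mono_right (subset_insert _ _)
  have hNv : G.neighborFinset v ∩ insert v J = ∅ := disjoint_iff_inter_eq_empty.mp <|
    disjoint_insert_right.mpr ⟨by simp, hJN.symm⟩
  rw [sum_filter_indepFinsets_sdiff_eq G hG hJ hJv, if_pos (mem_insert_self v J), hNv,
    card_insert_of_notMem hvJ, mul_add (lam ^ #J), mul_sum]
  congr 1
  · simp only [card_empty, Nat.cast_zero, add_zero, pow_succ]
    ring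
  refine sum_congr rfl fun S hS => ?_
  have hSU := mem_powerset.mp hS
  have hdisj := disjoint_of_subset_freeNeighborFinset G hJv hSU
  have hvS : v ∉ J ∪ S := by simpa [hvJ] using disjoint_left.mp hdisj (mem_insert_self v J)
  rw [card_union_of_disjoint (hdisj.mono_left (subset_insert _ _)), if_neg hvS,
    inter_union_distrib_left, inter_eq_right.mpr (hSU.trans (filter_subset _ _)),
    disjoint_iff_inter_eq_empty.mp hJN.symm, empty_union, pow_add]
  ring

theorem one_add_mul_hardCoreLocalBound_mul_sum_le (hG : G.CliqueFree 3) {v : V}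
    (hv : 0 < G.degree v) {lam γ : ℝ} (hlam : 0 < lam) (hγ : 0 < γ) :
    (1 + γ) * hardCoreLocalBound lam γ (G.degree v) * ∑ I ∈ indepFinsets G, lam ^ #I ≤
      ∑ I ∈ indepFinsets G, lam ^ #I *
        (γ * (if v ∈ I then (G.degree v : ℝ) else 0) + #(G.neighborFinset v ∩ I)) := by
  set N := insert v (G.neighborFinset v)
  have hmaps : ∀ I ∈ indepFinsets G, I \ N ∈ {J ∈ indepFinsets G | Disjoint J N} :=
    fun I hI => by
      simp only [indepFinsets, mem_filter, mem_univ, true_and] at hI ⊢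
      exact ⟨hI.mono sdiff_subset, sdiff_disjoint⟩
  rw [← sum_fiberwise_of_maps_to hmaps, ← sum_fiberwise_of_maps_to hmaps, mul_sum]
  refine sum_le_sum fun J hJ => ?_
  obtain ⟨hJ, hJN⟩ : IndepFinset G J ∧ Disjoint J N := by simpa [indepFinsets] using hJ
  rw [sum_filter_indepFinsets_sdiff_pow_card G hG hJ hJN,
    sum_filter_indepFinsets_sdiff_pow_card_mul G hG hJ hJN, mul_left_comm]
  exact mul_le_mul_of_nonneg_left (one_add_mul_hardCoreLocalBound_mul_le _ hlam hγ
    (Nat.cast_pos.mpr hv) (one_add_mul_sum_powerset_card_mul_pow _ lam)) (by positivity)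

end Fiber

/-- The expected number of edges leaving the hard-core independent set in a triangle-free
graph: for `𝐗 = Σ_{v ∈ 𝐈} deg(v)`, the number of edges between `𝐈` and its complement,
`𝔼𝐗 ≥ n·lam·((1/n)·Σ_v log deg(v) + log(α/β) + log log(1+lam) + 1) / ((1+α/β)·(1+lam)·log(1+lam))`. -/
theorem hard_core_expected_crossing_edges {V : Type*} [Fintype V] [DecidableEq V]
    (G : SimpleGraph V) [DecidableRel G.Adj] (hG : G.CliqueFree 3)
    (hdeg : ∀ v : V, 1 ≤ G.degree v)
    (lam α β : ℝ) (hlam : 0 < lam) (hα : 0 < α) (hβ : 0 < β) :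
    (Fintype.card V : ℝ) * lam *
        ((1 / (Fintype.card V : ℝ)) * (∑ v : V, Real.log (G.degree v)) +
          Real.log (α / β) + Real.log (Real.log (1 + lam)) + 1) /
        ((1 + α / β) * (1 + lam) * Real.log (1 + lam)) ≤
      ∑ I : Finset V, hcProb G lam I * ∑ v ∈ I, (G.degree v : ℝ) := by
  have hγ : 0 < α / β := div_pos hα hβ
  rw [card_mul_div_eq_sum_hardCoreLocalBound (d := fun v => (G.degree v : ℝ)), sum_hcProb_mul,
    le_div_iff₀ (sum_indepFinsets_pow_card_pos G hlam)]
  refine le_of_mul_le_mul_left ?_ (by positivity : (0 : ℝ) < 1 + α / β)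
  calc (1 + α / β) * ((∑ v, hardCoreLocalBound lam (α / β) (G.degree v)) *
        ∑ I ∈ indepFinsets G, lam ^ #I)
      = ∑ v, (1 + α / β) * hardCoreLocalBound lam (α / β) (G.degree v) *
          ∑ I ∈ indepFinsets G, lam ^ #I := by
        rw [sum_mul, mul_sum]
        simp_rw [mul_assoc]
    _ ≤ ∑ v, ∑ I ∈ indepFinsets G, lam ^ #I *
          (α / β * (if v ∈ I then (G.degree v : ℝ) else 0) + #(G.neighborFinset v ∩ I)) :=
        sum_le_sum fun v _ => one_add_mul_hardCoreLocalBound_mul_sum_le G hG (hdeg v) hlam hγ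
    _ = (1 + α / β) * ∑ I ∈ indepFinsets G, lam ^ #I * ∑ v ∈ I, (G.degree v : ℝ) := by
        rw [sum_comm, mul_sum]
        refine sum_congr rfl fun I _ => ?_
        rw [← mul_sum, sum_add_distrib, ← mul_sum, sum_ite_mem, univ_inter,
          ← Nat.cast_sum univ, G.sum_card_neighborFinset_inter, Nat.cast_sum]
        ring
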